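/- (Lemma 5.11, pointwise form: error between the continuous and discretized dynamic programming operators.) Assume in addition that C_v ≤ C_g. Then for every π ∈ M_1 one has 0 ≤ L(v,g)(π) − L^d(v,g)(π) ≤ ([g]_2 + 2 C_g C_λ) Δ. -/
import Mathlib


open MeasureTheory Finset

noncomputable section

namespace PDMP

/-- Integrated jump rate `Λ_i(t) = ∫_0^t λ_i(s) ds`. -/
def Lam (lam : ℕ → ℝ → ℝ) (i : ℕ) (t : ℝ) : ℝ := ∫ s in (0:ℝ)..t, lam i s

/-- The unnormalized filter density `Ψ_m^j(π,y,s)`. -/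
def psiNum (q d : ℕ) (ts : ℕ → ℝ) (lam : ℕ → ℝ → ℝ) (Q : ℕ → ℕ → ℝ → ℝ)
    (fW : (Fin d → ℝ) → ℝ) (phi : ℕ → Fin d → ℝ)
    (m : ℕ) (p : ℕ → ℝ) (y : Fin d → ℝ) (s : ℝ) (j : ℕ) : ℝ :=
  ∑ i ∈ Finset.Icc (m + 1) q,
    p i * lam i s * Real.exp (-(Lam lam i s)) * Q i j s * fW (y - phi j)

/-- `Ψ̄_m(π,y,s) = Σ_k Ψ_m^k(π,y,s)`. -/
def psiBar (q d : ℕ) (ts : ℕ → ℝ) (lam : ℕ → ℝ → ℝ) (Q : ℕ → ℕ → ℝ → ℝ)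
    (fW : (Fin d → ℝ) → ℝ) (phi : ℕ → Fin d → ℝ)
    (m : ℕ) (p : ℕ → ℝ) (y : Fin d → ℝ) (s : ℝ) : ℝ :=
  ∑ k ∈ Finset.Icc 1 q, psiNum q d ts lam Q fW phi m p y s k

open Classical in
/-- The filter update `Ψ(π,y,s)`. -/
def Psi (q d : ℕ) (ts : ℕ → ℝ) (lam : ℕ → ℝ → ℝ) (Q : ℕ → ℕ → ℝ → ℝ)
    (fW : (Fin d → ℝ) → ℝ) (phi : ℕ → Fin d → ℝ)
    (p : ℕ → ℝ) (y : Fin d → ℝ) (s : ℝ) : ℕ → ℝ :=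
  if ∃ m, 1 ≤ m ∧ m ≤ q ∧ s = ts m then
    let m := sInf {m | 1 ≤ m ∧ m ≤ q ∧ s = ts m}
    if 0 < ∑ k ∈ Finset.Icc 1 q, Q m k (ts m) * fW (y - phi k) then
      fun j => Q m j (ts m) * fW (y - phi j) /
        (∑ k ∈ Finset.Icc 1 q, Q m k (ts m) * fW (y - phi k))
    else p
  else if ∃ m, m < q ∧ ts m < s ∧ s < ts (m + 1) then
    let m := sInf {m | m < q ∧ ts m < s ∧ s < ts (m + 1)}
    if 0 < psiBar q d ts lam Q fW phi m p y s then
      fun j => psiNum q d ts lam Q fW phi m p y s j / psiBar q d ts lam Q fW phi m p y s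
    else p
  else p

/-- ℓ¹ distance on `ℝ^q` (coordinates `1,…,q`). -/
def l1 (q : ℕ) (p p' : ℕ → ℝ) : ℝ := ∑ i ∈ Finset.Icc 1 q, |p i - p' i|

/-- Membership in the probability simplex `M_1`. -/
def mem1 (q : ℕ) (p : ℕ → ℝ) : Prop :=
  (∀ i ∈ Finset.Icc 1 q, 0 ≤ p i) ∧ ∑ i ∈ Finset.Icc 1 q, p i = 1

/-- The operator `I`. -/
def Iop (q d : ℕ) (ts : ℕ → ℝ) (lam : ℕ → ℝ → ℝ) (Q : ℕ → ℕ → ℝ → ℝ)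
    (fW : (Fin d → ℝ) → ℝ) (phi : ℕ → Fin d → ℝ)
    (v : (ℕ → ℝ) → ℝ) (p : ℕ → ℝ) (u : ℝ) : ℝ :=
  ∑ i ∈ Finset.Icc 1 q, p i *
    ∫ s in (0:ℝ)..(min u (ts i)),
      lam i s * Real.exp (-(Lam lam i s)) *
        ∫ y : Fin d → ℝ,
          v (Psi q d ts lam Q fW phi p y s) *
            ∑ j ∈ Finset.Icc 1 q, Q i j s * fW (y - phi j)

/-- Boundary (forced-jump) term appearing in the operator `G`. -/
def bTerm (q d : ℕ) (ts : ℕ → ℝ) (lam : ℕ → ℝ → ℝ) (Q : ℕ → ℕ → ℝ → ℝ)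
    (fW : (Fin d → ℝ) → ℝ) (phi : ℕ → Fin d → ℝ)
    (v : (ℕ → ℝ) → ℝ) (p : ℕ → ℝ) (i : ℕ) : ℝ :=
  p i * Real.exp (-(Lam lam i (ts i))) *
    ∫ y : Fin d → ℝ,
      v (Psi q d ts lam Q fW phi p y (ts i)) *
        ∑ j ∈ Finset.Icc 1 q, Q i j (ts i) * fW (y - phi j)

/-- The operator `G`. -/
def Gop (q d : ℕ) (ts : ℕ → ℝ) (lam : ℕ → ℝ → ℝ) (Q : ℕ → ℕ → ℝ → ℝ)
    (fW : (Fin d → ℝ) → ℝ) (phi : ℕ → Fin d → ℝ)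
    (v : (ℕ → ℝ) → ℝ) (p : ℕ → ℝ) (u : ℝ) : ℝ :=
  Iop q d ts lam Q fW phi v p u +
    ∑ i ∈ Finset.Icc 1 q, if ts i ≤ u then bTerm q d ts lam Q fW phi v p i else 0

/-- The operator `H`. -/
def Hop (q : ℕ) (ts : ℕ → ℝ) (lam : ℕ → ℝ → ℝ)
    (g : ℕ → ℝ → ℝ) (p : ℕ → ℝ) (u : ℝ) : ℝ :=
  ∑ i ∈ Finset.Icc 1 q, if u < ts i then p i * Real.exp (-(Lam lam i u)) * g i u else 0

/-- The operator `J`. -/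
def Jop (q d : ℕ) (ts : ℕ → ℝ) (lam : ℕ → ℝ → ℝ) (Q : ℕ → ℕ → ℝ → ℝ)
    (fW : (Fin d → ℝ) → ℝ) (phi : ℕ → Fin d → ℝ)
    (v : (ℕ → ℝ) → ℝ) (g : ℕ → ℝ → ℝ) (p : ℕ → ℝ) (u : ℝ) : ℝ :=
  Hop q ts lam g p u + Gop q d ts lam Q fW phi v p u

/-- The operator `K`. -/
def Kop (q d : ℕ) (ts : ℕ → ℝ) (lam : ℕ → ℝ → ℝ) (Q : ℕ → ℕ → ℝ → ℝ)
    (fW : (Fin d → ℝ) → ℝ) (phi : ℕ → Fin d → ℝ)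
    (v : (ℕ → ℝ) → ℝ) (p : ℕ → ℝ) : ℝ :=
  Gop q d ts lam Q fW phi v p (ts q)

/-- The dynamic programming operator `L(v,g)(π) = sup_{u ≥ 0} J(v,g)(π,u)`. -/
def Lop (q d : ℕ) (ts : ℕ → ℝ) (lam : ℕ → ℝ → ℝ) (Q : ℕ → ℕ → ℝ → ℝ)
    (fW : (Fin d → ℝ) → ℝ) (phi : ℕ → Fin d → ℝ)
    (v : (ℕ → ℝ) → ℝ) (g : ℕ → ℝ → ℝ) (p : ℕ → ℝ) : ℝ :=
  ⨆ u : Set.Ici (0:ℝ), Jop q d ts lam Q fW phi v g p u.1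

/-- The operator `H^m`. -/
def Hm (q : ℕ) (ts : ℕ → ℝ) (lam : ℕ → ℝ → ℝ) (m : ℕ)
    (g : ℕ → ℝ → ℝ) (p : ℕ → ℝ) (u : ℝ) : ℝ :=
  if u < ts m then Hop q ts lam g p (ts m)
  else ∑ i ∈ Finset.Icc (m + 1) q,
    p i * Real.exp (-(Lam lam i (min u (ts (m + 1))))) * g i (min u (ts (m + 1)))

/-- The operator `G^m`. -/
def Gm (q d : ℕ) (ts : ℕ → ℝ) (lam : ℕ → ℝ → ℝ) (Q : ℕ → ℕ → ℝ → ℝ)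
    (fW : (Fin d → ℝ) → ℝ) (phi : ℕ → Fin d → ℝ) (m : ℕ)
    (v : (ℕ → ℝ) → ℝ) (p : ℕ → ℝ) (u : ℝ) : ℝ :=
  if u < ts m then Gop q d ts lam Q fW phi v p (ts m)
  else Iop q d ts lam Q fW phi v p (min u (ts (m + 1))) +
    ∑ i ∈ Finset.Icc 1 m, bTerm q d ts lam Q fW phi v p i

/-- The discretization grid `Gr_m(Δ)`. -/
def grid (ts : ℕ → ℝ) (Δ : ℝ) (m : ℕ) : Set ℝ :=
  {u | (∃ i : ℕ, 1 ≤ i ∧ ts m + i * Δ ≤ ts (m + 1) - Δ ∧ u = ts m + i * Δ) ∨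
    u = ts (m + 1) - Δ}


section aux

section basic
variable {q : ℕ} {ts : ℕ → ℝ} {lam : ℕ → ℝ → ℝ} {Clam : ℝ}

lemma ts_mono (htsmono : ∀ i, i < q → ts i ≤ ts (i + 1)) :
    ∀ i j, i ≤ j → j ≤ q → ts i ≤ ts j := by
  intro i j hij hjq
  induction j with
  | zero => simp_all
  | succ n ih =>
    rcases Nat.lt_or_ge i (n+1) with h | h
    · exact le_trans (ih (Nat.lt_succ_iff.mp h) (le_trans (Nat.le_succ n) hjq))
        (htsmono n (Nat.lt_of_lt_of_le (Nat.lt_succ_self n) hjq))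
    · have : i = n + 1 := le_antisymm hij h
      simp [this]

lemma ts_nonneg (hts0 : ts 0 = 0) (htsmono : ∀ i, i < q → ts i ≤ ts (i + 1)) :
    ∀ i, i ≤ q → 0 ≤ ts i := by
  intro i hi
  have := ts_mono htsmono 0 i (Nat.zero_le i) hi
  simpa [hts0] using this

lemma lam_intInt (hlam_meas : ∀ i, Measurable (lam i))
    (hlam_bd : ∀ i s, 0 ≤ s → lam i s ∈ Set.Icc 0 Clam)
    (i : ℕ) {a b : ℝ} (ha : 0 ≤ a) (hab : a ≤ b) :
    IntervalIntegrable (lam i) volume a b := by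
  rw [intervalIntegrable_iff_integrableOn_Ioc_of_le hab]
  refine Integrable.mono' (integrable_const Clam) ((hlam_meas i).aestronglyMeasurable.restrict) ?_
  filter_upwards [ae_restrict_mem measurableSet_Ioc] with s hs
  have h := hlam_bd i s (le_trans ha hs.1.le)
  rw [Real.norm_eq_abs, abs_of_nonneg h.1]
  exact h.2

lemma Lam_nonneg (hlam_bd : ∀ i s, 0 ≤ s → lam i s ∈ Set.Icc 0 Clam)
    (i : ℕ) {t : ℝ} (ht : 0 ≤ t) : 0 ≤ Lam lam i t := by
  apply intervalIntegral.integral_nonneg ht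
  intro u hu
  exact (hlam_bd i u hu.1).1

lemma Lam_diff (hlam_meas : ∀ i, Measurable (lam i))
    (hlam_bd : ∀ i s, 0 ≤ s → lam i s ∈ Set.Icc 0 Clam)
    (i : ℕ) {a b : ℝ} (ha : 0 ≤ a) (hab : a ≤ b) :
    Lam lam i b - Lam lam i a = ∫ s in a..b, lam i s := by
  have h1 : IntervalIntegrable (lam i) volume 0 a := lam_intInt hlam_meas hlam_bd i le_rfl ha
  have h2 : IntervalIntegrable (lam i) volume a b := lam_intInt hlam_meas hlam_bd i ha hab
  have := intervalIntegral.integral_add_adjacent_intervals h1 h2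
  unfold Lam
  linarith [this]

lemma Lam_diff_bounds (hClam : 0 ≤ Clam) (hlam_meas : ∀ i, Measurable (lam i))
    (hlam_bd : ∀ i s, 0 ≤ s → lam i s ∈ Set.Icc 0 Clam)
    (i : ℕ) {a b : ℝ} (ha : 0 ≤ a) (hab : a ≤ b) :
    0 ≤ Lam lam i b - Lam lam i a ∧ Lam lam i b - Lam lam i a ≤ Clam * (b - a) := by
  rw [Lam_diff hlam_meas hlam_bd i ha hab]
  constructor
  · apply intervalIntegral.integral_nonneg hab
    intro u hu
    exact (hlam_bd i u (le_trans ha hu.1)).1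
  · calc ∫ s in a..b, lam i s ≤ ∫ s in a..b, Clam := by
          apply intervalIntegral.integral_mono_on hab
            (lam_intInt hlam_meas hlam_bd i ha hab) intervalIntegrable_const
          intro u hu
          exact (hlam_bd i u (le_trans ha hu.1)).2
    _ = Clam * (b - a) := by simp [mul_comm]

lemma exp_neg_lip {x y : ℝ} (hx : 0 ≤ x) (hy : 0 ≤ y) :
    |Real.exp (-x) - Real.exp (-y)| ≤ |x - y| := by
  wlog h : x ≤ y generalizing x y
  · rw [abs_sub_comm, abs_sub_comm x y]
    exact this hy hx (le_of_not_ge h)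
  have h1 : Real.exp (-y) ≤ Real.exp (-x) := Real.exp_le_exp.mpr (by linarith)
  rw [abs_of_nonneg (by linarith), abs_of_nonpos (by linarith)]
  have h2 : Real.exp (-x) ≤ 1 := Real.exp_le_one_iff.mpr (by linarith)
  have h3 : 1 - (y - x) ≤ Real.exp (-(y-x)) := by
    have := Real.add_one_le_exp (-(y-x))
    linarith
  have h4 : Real.exp (-y) = Real.exp (-x) * Real.exp (-(y-x)) := by
    rw [← Real.exp_add]; ring_nf
  nlinarith [Real.exp_nonneg (-x), Real.exp_nonneg (-(y-x))]

end basic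



section psi
variable {q d : ℕ} {ts : ℕ → ℝ} {lam : ℕ → ℝ → ℝ} {Q : ℕ → ℕ → ℝ → ℝ}
  {fW : (Fin d → ℝ) → ℝ} {phi : ℕ → Fin d → ℝ} {Clam : ℝ} {p : ℕ → ℝ}

lemma psiNum_nonneg (hts0 : ts 0 = 0) (htsmono : ∀ i, i < q → ts i ≤ ts (i + 1))
    (hlam_bd : ∀ i s, 0 ≤ s → lam i s ∈ Set.Icc 0 Clam)
    (hQ_bd : ∀ i j s, 0 ≤ s → Q i j s ∈ Set.Icc (0:ℝ) 1)
    (hfW_nonneg : ∀ y, 0 ≤ fW y) (hp : mem1 q p)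
    (m : ℕ) (y : Fin d → ℝ) {s : ℝ} (hs : 0 ≤ s) (j : ℕ) :
    0 ≤ psiNum q d ts lam Q fW phi m p y s j := by
  apply Finset.sum_nonneg
  intro i hi
  simp only [Finset.mem_Icc] at hi
  have hpi : 0 ≤ p i := hp.1 i (Finset.mem_Icc.mpr ⟨le_trans (Nat.le_add_left 1 m) hi.1, hi.2⟩)
  have := (hlam_bd i s hs).1
  have := (hQ_bd i j s hs).1
  have := hfW_nonneg (y - phi j)
  positivity

/-- `Psi` maps the simplex into itself. -/
lemma Psi_mem1 (hts0 : ts 0 = 0) (htsmono : ∀ i, i < q → ts i ≤ ts (i + 1))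
    (hlam_bd : ∀ i s, 0 ≤ s → lam i s ∈ Set.Icc 0 Clam)
    (hQ_bd : ∀ i j s, 0 ≤ s → Q i j s ∈ Set.Icc (0:ℝ) 1)
    (hfW_nonneg : ∀ y, 0 ≤ fW y) (hp : mem1 q p)
    (y : Fin d → ℝ) (s : ℝ) :
    mem1 q (Psi q d ts lam Q fW phi p y s) := by
  classical
  unfold Psi
  by_cases h1 : ∃ m, 1 ≤ m ∧ m ≤ q ∧ s = ts m
  · rw [if_pos h1]
    dsimp only
    set m := sInf {m | 1 ≤ m ∧ m ≤ q ∧ s = ts m} with hm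
    have hmem : m ∈ {m | 1 ≤ m ∧ m ≤ q ∧ s = ts m} := Nat.sInf_mem h1
    have htm : 0 ≤ ts m := ts_nonneg hts0 htsmono m hmem.2.1
    by_cases hD : 0 < ∑ k ∈ Finset.Icc 1 q, Q m k (ts m) * fW (y - phi k)
    · rw [if_pos hD]
      constructor
      · intro j _
        have := (hQ_bd m j (ts m) htm).1
        have := hfW_nonneg (y - phi j)
        positivity
      · rw [← Finset.sum_div]
        field_simp
    · rw [if_neg hD]; exact hp
  · rw [if_neg h1]
    by_cases h2 : ∃ m, m < q ∧ ts m < s ∧ s < ts (m + 1)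
    · rw [if_pos h2]
      dsimp only
      set m := sInf {m | m < q ∧ ts m < s ∧ s < ts (m + 1)} with hm
      have hmem : m ∈ {m | m < q ∧ ts m < s ∧ s < ts (m + 1)} := Nat.sInf_mem h2
      have hs : 0 ≤ s := le_trans (ts_nonneg hts0 htsmono m hmem.1.le) hmem.2.1.le
      by_cases hD : 0 < psiBar q d ts lam Q fW phi m p y s
      · rw [if_pos hD]
        constructor
        · intro j _
          exact div_nonneg (psiNum_nonneg hts0 htsmono hlam_bd hQ_bd hfW_nonneg hp m y hs j) hD.le
        · rw [← Finset.sum_div]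
          rw [show ∑ j ∈ Finset.Icc 1 q, psiNum q d ts lam Q fW phi m p y s j
            = psiBar q d ts lam Q fW phi m p y s from rfl]
          field_simp
      · rw [if_neg hD]; exact hp
    · rw [if_neg h2]; exact hp

end psi

section wb
variable {q d : ℕ} {fW : (Fin d → ℝ) → ℝ} {Q : ℕ → ℕ → ℝ → ℝ}

lemma fW_integrable (hfW_int : ∫ y : Fin d → ℝ, fW y = 1) : Integrable fW := by
  by_contra h
  rw [integral_undef h] at hfW_int
  norm_num at hfW_int

lemma fW_shift_integrable (hfW_int : ∫ y : Fin d → ℝ, fW y = 1) (c : Fin d → ℝ) :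
    Integrable (fun y => fW (y - c)) := by
  exact (measurePreserving_sub_right volume c).integrable_comp_emb
    (MeasurableEquiv.subRight c).measurableEmbedding |>.mpr (fW_integrable hfW_int)

lemma fW_shift_integral (hfW_int : ∫ y : Fin d → ℝ, fW y = 1) (c : Fin d → ℝ) :
    ∫ y : Fin d → ℝ, fW (y - c) = 1 := by
  rw [integral_sub_right_eq_self fW c]; exact hfW_int

/-- bound on `∫ h y * Σ_j Q_ij fW(y - phi j) dy` for `|h| ≤ C`. -/
lemma W_abs_le (hfW_nonneg : ∀ y, 0 ≤ fW y) (hfW_int : ∫ y : Fin d → ℝ, fW y = 1)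
    (phi : ℕ → Fin d → ℝ) (i : ℕ) {s : ℝ} (hs : 0 ≤ s)
    (hQ_bd : ∀ i j s, 0 ≤ s → Q i j s ∈ Set.Icc (0:ℝ) 1)
    (hQ_sum : ∀ i s, 0 ≤ s → ∑ j ∈ Finset.Icc 1 q, Q i j s = 1)
    {h : (Fin d → ℝ) → ℝ} {C : ℝ} (hC : 0 ≤ C) (hh : ∀ y, |h y| ≤ C) :
    |∫ y : Fin d → ℝ, h y * ∑ j ∈ Finset.Icc 1 q, Q i j s * fW (y - phi j)| ≤ C := by
  have hdom : Integrable (fun y : Fin d → ℝ => C * ∑ j ∈ Finset.Icc 1 q, Q i j s * fW (y - phi j)) := by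
    apply Integrable.const_mul
    apply integrable_finset_sum
    intro j _
    exact (fW_shift_integrable hfW_int (phi j)).const_mul _
  have hnn : ∀ y : Fin d → ℝ, 0 ≤ ∑ j ∈ Finset.Icc 1 q, Q i j s * fW (y - phi j) := by
    intro y
    apply Finset.sum_nonneg
    intro j _
    exact mul_nonneg (hQ_bd i j s hs).1 (hfW_nonneg _)
  calc |∫ y : Fin d → ℝ, h y * ∑ j ∈ Finset.Icc 1 q, Q i j s * fW (y - phi j)|
      ≤ ∫ y : Fin d → ℝ, |h y * ∑ j ∈ Finset.Icc 1 q, Q i j s * fW (y - phi j)| := by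
        simp only [← Real.norm_eq_abs]; exact norm_integral_le_integral_norm (μ := (volume : Measure (Fin d → ℝ))) (fun y => h y * ∑ j ∈ Finset.Icc 1 q, Q i j s * fW (y - phi j))
    _ ≤ ∫ y : Fin d → ℝ, C * ∑ j ∈ Finset.Icc 1 q, Q i j s * fW (y - phi j) := by
        apply integral_mono_of_nonneg
        · filter_upwards with y; positivity
        · exact hdom
        · filter_upwards with y
          rw [abs_mul, abs_of_nonneg (hnn y)]
          exact mul_le_mul_of_nonneg_right (hh y) (hnn y)
    _ = C * ∑ j ∈ Finset.Icc 1 q, Q i j s * ∫ y : Fin d → ℝ, fW (y - phi j) := by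
        rw [MeasureTheory.integral_const_mul]
        congr 1
        rw [integral_finset_sum]
        · congr 1; ext j; rw [MeasureTheory.integral_const_mul]
        · intro j _; exact (fW_shift_integrable hfW_int (phi j)).const_mul _
    _ = C := by
        have : ∀ j ∈ Finset.Icc 1 q, Q i j s * ∫ y : Fin d → ℝ, fW (y - phi j) = Q i j s := by
          intro j _; rw [fW_shift_integral hfW_int]; ring
        rw [Finset.sum_congr rfl this, hQ_sum i s hs, mul_one]

end wb

section meas
variable {q d : ℕ} {ts : ℕ → ℝ} {lam : ℕ → ℝ → ℝ} {Q : ℕ → ℕ → ℝ → ℝ}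
  {fW : (Fin d → ℝ) → ℝ} {phi : ℕ → Fin d → ℝ} {Clam : ℝ} {p : ℕ → ℝ}
  {v : (ℕ → ℝ) → ℝ}

/-- truncated rate -/
def lamp (lam : ℕ → ℝ → ℝ) (i : ℕ) (s : ℝ) : ℝ := if 0 ≤ s then lam i s else 0

/-- primitive of truncated rate -/
def Lam2 (lam : ℕ → ℝ → ℝ) (i : ℕ) (t : ℝ) : ℝ := ∫ s in (0:ℝ)..t, lamp lam i s

lemma lamp_intInt (hlam_meas : ∀ i, Measurable (lam i))
    (hlam_bd : ∀ i s, 0 ≤ s → lam i s ∈ Set.Icc 0 Clam) (hClam : 0 ≤ Clam)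
    (i : ℕ) (a b : ℝ) : IntervalIntegrable (lamp lam i) volume a b := by
  apply IntervalIntegrable.mono_fun' (g := fun _ => Clam) intervalIntegrable_const
  · exact ((hlam_meas i).ite measurableSet_Ici measurable_const).aestronglyMeasurable
  · filter_upwards with s
    unfold lamp
    split_ifs with h
    · have := hlam_bd i s h
      rw [Real.norm_eq_abs, abs_of_nonneg this.1]; exact this.2
    · simpa [Real.norm_eq_abs] using hClam

lemma Lam2_cont (hlam_meas : ∀ i, Measurable (lam i))
    (hlam_bd : ∀ i s, 0 ≤ s → lam i s ∈ Set.Icc 0 Clam) (hClam : 0 ≤ Clam)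
    (i : ℕ) : Continuous (Lam2 lam i) :=
  intervalIntegral.continuous_primitive (fun a b => lamp_intInt hlam_meas hlam_bd hClam i a b) 0

lemma Lam2_eq_Lam (i : ℕ) {t : ℝ} (ht : 0 ≤ t) : Lam2 lam i t = Lam lam i t := by
  unfold Lam2 Lam
  apply intervalIntegral.integral_congr
  intro s hs
  rw [Set.uIcc_of_le ht] at hs
  unfold lamp
  rw [if_pos hs.1]

/-- good version of psiNum -/
def psiNum2 (q d : ℕ) (ts : ℕ → ℝ) (lam : ℕ → ℝ → ℝ) (Q : ℕ → ℕ → ℝ → ℝ)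
    (fW : (Fin d → ℝ) → ℝ) (phi : ℕ → Fin d → ℝ)
    (m : ℕ) (p : ℕ → ℝ) (z : ℝ × (Fin d → ℝ)) (j : ℕ) : ℝ :=
  ∑ i ∈ Finset.Icc (m + 1) q,
    p i * lam i z.1 * Real.exp (-(Lam2 lam i z.1)) * Q i j z.1 * fW (z.2 - phi j)

def psiBar2 (q d : ℕ) (ts : ℕ → ℝ) (lam : ℕ → ℝ → ℝ) (Q : ℕ → ℕ → ℝ → ℝ)
    (fW : (Fin d → ℝ) → ℝ) (phi : ℕ → Fin d → ℝ)
    (m : ℕ) (p : ℕ → ℝ) (z : ℝ × (Fin d → ℝ)) : ℝ :=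
  ∑ k ∈ Finset.Icc 1 q, psiNum2 q d ts lam Q fW phi m p z k

lemma fW_shift_meas (hfW_meas : Measurable fW) (c : Fin d → ℝ) :
    Measurable (fun y : Fin d → ℝ => fW (y - c)) :=
  hfW_meas.comp (MeasurableEquiv.subRight c).measurable

lemma psiNum2_meas (hlam_meas : ∀ i, Measurable (lam i))
    (hlam_bd : ∀ i s, 0 ≤ s → lam i s ∈ Set.Icc 0 Clam) (hClam : 0 ≤ Clam)
    (hQ_meas : ∀ i j, Measurable (Q i j)) (hfW_meas : Measurable fW)
    (m : ℕ) (j : ℕ) :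
    Measurable (fun z : ℝ × (Fin d → ℝ) => psiNum2 q d ts lam Q fW phi m p z j) := by
  apply Finset.measurable_sum
  intro i _
  exact (((measurable_const.mul ((hlam_meas i).comp measurable_fst)).mul
      (((Real.continuous_exp.comp (Lam2_cont hlam_meas hlam_bd hClam i).neg).measurable).comp
        measurable_fst)).mul ((hQ_meas i j).comp measurable_fst)).mul
    ((fW_shift_meas hfW_meas (phi j)).comp measurable_snd)

lemma psiBar2_meas (hlam_meas : ∀ i, Measurable (lam i))
    (hlam_bd : ∀ i s, 0 ≤ s → lam i s ∈ Set.Icc 0 Clam) (hClam : 0 ≤ Clam)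
    (hQ_meas : ∀ i j, Measurable (Q i j)) (hfW_meas : Measurable fW) (m : ℕ) :
    Measurable (fun z : ℝ × (Fin d → ℝ) => psiBar2 q d ts lam Q fW phi m p z) := by
  apply Finset.measurable_sum
  intro k _
  exact psiNum2_meas hlam_meas hlam_bd hClam hQ_meas hfW_meas m k

/-- the interior-piece set -/
def Ak (q : ℕ) (ts : ℕ → ℝ) (k : ℕ) : Set ℝ :=
  {s | (k < q ∧ ts k < s ∧ s < ts (k + 1)) ∧ ∀ m < k, ¬(m < q ∧ ts m < s ∧ s < ts (m + 1))}

lemma Ak_measurable (q : ℕ) (ts : ℕ → ℝ) (k : ℕ) : MeasurableSet (Ak q ts k) := by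
  have h1 : ∀ m : ℕ, MeasurableSet {s : ℝ | m < q ∧ ts m < s ∧ s < ts (m + 1)} := by
    intro m
    by_cases hm : m < q
    · have : {s : ℝ | m < q ∧ ts m < s ∧ s < ts (m + 1)} = Set.Ioo (ts m) (ts (m+1)) := by
        ext s; simp [hm, Set.mem_Ioo]
      rw [this]; exact measurableSet_Ioo
    · have : {s : ℝ | m < q ∧ ts m < s ∧ s < ts (m + 1)} = ∅ := by
        ext s; simp [hm]
      rw [this]; exact MeasurableSet.empty
  have : Ak q ts k = {s : ℝ | k < q ∧ ts k < s ∧ s < ts (k + 1)} ∩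
      ⋂ m ∈ Finset.range k, {s : ℝ | m < q ∧ ts m < s ∧ s < ts (m + 1)}ᶜ := by
    ext s
    simp only [Ak, Set.mem_setOf_eq, Set.mem_inter_iff, Set.mem_iInter, Set.mem_compl_iff,
      Finset.mem_range]
  rw [this]
  exact (h1 k).inter (MeasurableSet.biInter (Set.to_countable _) (fun m _ => (h1 m).compl))

open Classical in
/-- jointly measurable modification of `v ∘ Psi` -/
def VP (q d : ℕ) (ts : ℕ → ℝ) (lam : ℕ → ℝ → ℝ) (Q : ℕ → ℕ → ℝ → ℝ)
    (fW : (Fin d → ℝ) → ℝ) (phi : ℕ → Fin d → ℝ) (v : (ℕ → ℝ) → ℝ)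
    (p : ℕ → ℝ) (z : ℝ × (Fin d → ℝ)) : ℝ :=
  (∑ k ∈ Finset.range q, Set.indicator (Ak q ts k ×ˢ Set.univ)
    (fun z => if 0 < psiBar2 q d ts lam Q fW phi k p z then
        v (fun j => psiNum2 q d ts lam Q fW phi k p z j / psiBar2 q d ts lam Q fW phi k p z)
      else v p) z)
  + Set.indicator ({s : ℝ | ¬ ∃ m, m < q ∧ ts m < s ∧ s < ts (m + 1)} ×ˢ Set.univ)
      (fun _ => v p) z

lemma VP_meas (hlam_meas : ∀ i, Measurable (lam i))
    (hlam_bd : ∀ i s, 0 ≤ s → lam i s ∈ Set.Icc 0 Clam) (hClam : 0 ≤ Clam)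
    (hQ_meas : ∀ i j, Measurable (Q i j)) (hfW_meas : Measurable fW)
    (hv_meas : Measurable v) :
    Measurable (VP q d ts lam Q fW phi v p) := by
  apply Measurable.add
  · apply Finset.measurable_sum
    intro k _
    refine Measurable.indicator ?_ ((Ak_measurable q ts k).prod MeasurableSet.univ)
    refine Measurable.ite (measurableSet_lt measurable_const
        (psiBar2_meas hlam_meas hlam_bd hClam hQ_meas hfW_meas k)) ?_ measurable_const
    apply hv_meas.comp
    apply measurable_pi_lambda
    intro j
    exact (psiNum2_meas hlam_meas hlam_bd hClam hQ_meas hfW_meas k j).div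
      (psiBar2_meas hlam_meas hlam_bd hClam hQ_meas hfW_meas k)
  · apply Measurable.indicator measurable_const
    apply MeasurableSet.prod _ MeasurableSet.univ
    have : {s : ℝ | ¬ ∃ m, m < q ∧ ts m < s ∧ s < ts (m + 1)} =
        (⋃ m ∈ Finset.range q, Set.Ioo (ts m) (ts (m+1)))ᶜ := by
      ext s
      simp only [Set.mem_compl_iff, Set.mem_iUnion, Set.mem_setOf_eq, Finset.mem_range,
        Set.mem_Ioo, not_exists]
      aesop
    rw [this]
    exact (MeasurableSet.biUnion (Set.to_countable _) (fun m _ => measurableSet_Ioo)).compl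


lemma mem_Ak_iff {s : ℝ} {k : ℕ} :
    s ∈ Ak q ts k ↔ (∃ m, m < q ∧ ts m < s ∧ s < ts (m + 1)) ∧
      sInf {m | m < q ∧ ts m < s ∧ s < ts (m + 1)} = k := by
  constructor
  · rintro ⟨hk, hmin⟩
    refine ⟨⟨k, hk⟩, le_antisymm (Nat.sInf_le hk) ?_⟩
    by_contra h
    push_neg at h
    have hmem := Nat.sInf_mem (⟨k, hk⟩ : {m | m < q ∧ ts m < s ∧ s < ts (m + 1)}.Nonempty)
    exact hmin _ h hmem
  · rintro ⟨hne, rfl⟩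
    exact ⟨Nat.sInf_mem hne, fun m hm => Nat.notMem_of_lt_sInf hm⟩

open Classical in
lemma VP_eq_Psi (hts0 : ts 0 = 0) (htsmono : ∀ i, i < q → ts i ≤ ts (i + 1))
    {s : ℝ} (hs : ¬ ∃ m, 1 ≤ m ∧ m ≤ q ∧ s = ts m) (y : Fin d → ℝ) :
    VP q d ts lam Q fW phi v p (s, y) = v (Psi q d ts lam Q fW phi p y s) := by
  unfold VP Psi
  rw [if_neg hs]
  by_cases h2 : ∃ m, m < q ∧ ts m < s ∧ s < ts (m + 1)
  · rw [if_pos h2]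
    dsimp only
    set k0 := sInf {m | m < q ∧ ts m < s ∧ s < ts (m + 1)} with hk0
    have hmem : k0 ∈ {m | m < q ∧ ts m < s ∧ s < ts (m + 1)} := Nat.sInf_mem h2
    have hsAk : s ∈ Ak q ts k0 := mem_Ak_iff.mpr ⟨h2, rfl⟩
    have hs0 : (0:ℝ) ≤ s :=
      le_trans (ts_nonneg hts0 htsmono k0 hmem.1.le) hmem.2.1.le
    have hnum : ∀ k j, psiNum2 q d ts lam Q fW phi k p (s, y) j
        = psiNum q d ts lam Q fW phi k p y s j := by
      intro k j
      unfold psiNum2 psiNum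
      apply Finset.sum_congr rfl
      intro i _
      rw [Lam2_eq_Lam i hs0]
    have hbar : ∀ k, psiBar2 q d ts lam Q fW phi k p (s, y)
        = psiBar q d ts lam Q fW phi k p y s := by
      intro k
      unfold psiBar2 psiBar
      exact Finset.sum_congr rfl fun j _ => hnum k j
    rw [Finset.sum_eq_single k0]
    · rw [Set.indicator_of_mem (by exact ⟨hsAk, Set.mem_univ y⟩),
        Set.indicator_of_notMem (by simp [h2])]
      rw [hbar, ]
      simp only [hnum]
      rw [add_zero, apply_ite v]
    · intro k _ hkne
      apply Set.indicator_of_notMem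
      intro hk
      exact hkne ((mem_Ak_iff.mp hk.1).2.symm ▸ rfl)
    · intro hk0q
      exact absurd (Finset.mem_range.mpr hmem.1) hk0q
  · rw [if_neg h2]
    have : ∀ k ∈ Finset.range q, Set.indicator (Ak q ts k ×ˢ Set.univ)
        (fun z => if 0 < psiBar2 q d ts lam Q fW phi k p z then
          v (fun j => psiNum2 q d ts lam Q fW phi k p z j / psiBar2 q d ts lam Q fW phi k p z)
        else v p) (s, y) = 0 := by
      intro k _
      apply Set.indicator_of_notMem
      intro hk
      exact h2 (mem_Ak_iff.mp hk.1).1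
    rw [Finset.sum_congr rfl this]
    simp [h2]

end meas

section wfun
variable {q d : ℕ} {ts : ℕ → ℝ} {lam : ℕ → ℝ → ℝ} {Q : ℕ → ℕ → ℝ → ℝ}
  {fW : (Fin d → ℝ) → ℝ} {phi : ℕ → Fin d → ℝ} {Clam Cv : ℝ} {p : ℕ → ℝ}
  {v : (ℕ → ℝ) → ℝ}

/-- inner integral -/
def Wfun (q d : ℕ) (ts : ℕ → ℝ) (lam : ℕ → ℝ → ℝ) (Q : ℕ → ℕ → ℝ → ℝ)
    (fW : (Fin d → ℝ) → ℝ) (phi : ℕ → Fin d → ℝ) (v : (ℕ → ℝ) → ℝ)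
    (p : ℕ → ℝ) (i : ℕ) (s : ℝ) : ℝ :=
  ∫ y : Fin d → ℝ,
    v (Psi q d ts lam Q fW phi p y s) * ∑ j ∈ Finset.Icc 1 q, Q i j s * fW (y - phi j)

def W2 (q d : ℕ) (ts : ℕ → ℝ) (lam : ℕ → ℝ → ℝ) (Q : ℕ → ℕ → ℝ → ℝ)
    (fW : (Fin d → ℝ) → ℝ) (phi : ℕ → Fin d → ℝ) (v : (ℕ → ℝ) → ℝ)
    (p : ℕ → ℝ) (i : ℕ) (s : ℝ) : ℝ :=
  ∫ y : Fin d → ℝ,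
    VP q d ts lam Q fW phi v p (s, y) * ∑ j ∈ Finset.Icc 1 q, Q i j s * fW (y - phi j)

lemma W2_meas (hlam_meas : ∀ i, Measurable (lam i))
    (hlam_bd : ∀ i s, 0 ≤ s → lam i s ∈ Set.Icc 0 Clam) (hClam : 0 ≤ Clam)
    (hQ_meas : ∀ i j, Measurable (Q i j)) (hfW_meas : Measurable fW)
    (hv_meas : Measurable v) (i : ℕ) :
    Measurable (W2 q d ts lam Q fW phi v p i) := by
  have hjoint : StronglyMeasurable (fun z : ℝ × (Fin d → ℝ) =>
      VP q d ts lam Q fW phi v p z * ∑ j ∈ Finset.Icc 1 q, Q i j z.1 * fW (z.2 - phi j)) := by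
    apply Measurable.stronglyMeasurable
    apply (VP_meas hlam_meas hlam_bd hClam hQ_meas hfW_meas hv_meas).mul
    apply Finset.measurable_sum
    intro j _
    exact ((hQ_meas i j).comp measurable_fst).mul
      ((fW_shift_meas hfW_meas (phi j)).comp measurable_snd)
  exact (hjoint.integral_prod_right').measurable

lemma Wfun_eq_W2 (hts0 : ts 0 = 0) (htsmono : ∀ i, i < q → ts i ≤ ts (i + 1))
    {s : ℝ} (hs : ¬ ∃ m, 1 ≤ m ∧ m ≤ q ∧ s = ts m) (i : ℕ) :
    Wfun q d ts lam Q fW phi v p i s = W2 q d ts lam Q fW phi v p i s := by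
  unfold Wfun W2
  congr 1
  ext y
  rw [VP_eq_Psi hts0 htsmono hs y]

lemma Wfun_abs_le (hts0 : ts 0 = 0) (htsmono : ∀ i, i < q → ts i ≤ ts (i + 1))
    (hlam_bd : ∀ i s, 0 ≤ s → lam i s ∈ Set.Icc 0 Clam)
    (hQ_bd : ∀ i j s, 0 ≤ s → Q i j s ∈ Set.Icc (0:ℝ) 1)
    (hQ_sum : ∀ i s, 0 ≤ s → ∑ j ∈ Finset.Icc 1 q, Q i j s = 1)
    (hfW_nonneg : ∀ y, 0 ≤ fW y) (hfW_int : ∫ y : Fin d → ℝ, fW y = 1)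
    (hCv : 0 ≤ Cv) (hv_bd : ∀ p', mem1 q p' → |v p'| ≤ Cv) (hp : mem1 q p)
    (i : ℕ) {s : ℝ} (hs : 0 ≤ s) :
    |Wfun q d ts lam Q fW phi v p i s| ≤ Cv := by
  apply W_abs_le hfW_nonneg hfW_int phi i hs hQ_bd hQ_sum hCv
  intro y
  exact hv_bd _ (Psi_mem1 hts0 htsmono hlam_bd hQ_bd hfW_nonneg hp y s)

/-- the set of boundary times is null -/
lemma S1_null : (volume : Measure ℝ) {s : ℝ | ∃ m, 1 ≤ m ∧ m ≤ q ∧ s = ts m} = 0 := by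
  have hsub : {s : ℝ | ∃ m, 1 ≤ m ∧ m ≤ q ∧ s = ts m} ⊆
      ⋃ m ∈ Finset.Icc 1 q, {ts m} := by
    rintro s ⟨m, h1, h2, rfl⟩
    exact Set.mem_biUnion (Finset.mem_Icc.mpr ⟨h1, h2⟩) rfl
  refine measure_mono_null hsub ?_
  exact (measure_biUnion_null_iff (Finset.Icc 1 q).countable_toSet).mpr
    (fun m _ => measure_singleton _)

/-- interval integrability of the integrand of `Iop`. -/
lemma F_intInt (hts0 : ts 0 = 0) (htsmono : ∀ i, i < q → ts i ≤ ts (i + 1))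
    (hlam_meas : ∀ i, Measurable (lam i))
    (hlam_bd : ∀ i s, 0 ≤ s → lam i s ∈ Set.Icc 0 Clam) (hClam : 0 ≤ Clam)
    (hQ_meas : ∀ i j, Measurable (Q i j))
    (hQ_bd : ∀ i j s, 0 ≤ s → Q i j s ∈ Set.Icc (0:ℝ) 1)
    (hQ_sum : ∀ i s, 0 ≤ s → ∑ j ∈ Finset.Icc 1 q, Q i j s = 1)
    (hfW_meas : Measurable fW)
    (hfW_nonneg : ∀ y, 0 ≤ fW y) (hfW_int : ∫ y : Fin d → ℝ, fW y = 1)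
    (hv_meas : Measurable v) (hCv : 0 ≤ Cv)
    (hv_bd : ∀ p', mem1 q p' → |v p'| ≤ Cv) (hp : mem1 q p)
    (i : ℕ) {a b : ℝ} (ha : 0 ≤ a) (hab : a ≤ b) :
    IntervalIntegrable (fun s => lam i s * Real.exp (-(Lam lam i s)) *
      Wfun q d ts lam Q fW phi v p i s) volume a b := by
  rw [intervalIntegrable_iff_integrableOn_Ioc_of_le hab]
  have hG : Measurable (fun s => lam i s * Real.exp (-(Lam2 lam i s)) *
      W2 q d ts lam Q fW phi v p i s) := by
    exact ((hlam_meas i).mul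
      ((Real.continuous_exp.comp (Lam2_cont hlam_meas hlam_bd hClam i).neg).measurable)).mul
      (W2_meas hlam_meas hlam_bd hClam hQ_meas hfW_meas hv_meas i)
  have hae : (fun s => lam i s * Real.exp (-(Lam lam i s)) *
      Wfun q d ts lam Q fW phi v p i s)
      =ᵐ[volume.restrict (Set.Ioc a b)] (fun s => lam i s * Real.exp (-(Lam2 lam i s)) *
      W2 q d ts lam Q fW phi v p i s) := by
    have h1 : ∀ᵐ s ∂(volume.restrict (Set.Ioc a b)),
        ¬ ∃ m, 1 ≤ m ∧ m ≤ q ∧ s = ts m := by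
      apply ae_restrict_of_ae
      rw [ae_iff]
      simpa [not_not] using S1_null (q := q) (ts := ts)
    filter_upwards [h1, ae_restrict_mem measurableSet_Ioc] with s hs1 hs2
    rw [Wfun_eq_W2 hts0 htsmono hs1 i, Lam2_eq_Lam i (le_trans ha hs2.1.le)]
  refine Integrable.mono' (integrable_const (Clam * Cv))
    (hG.aestronglyMeasurable.congr hae.symm) ?_
  filter_upwards [hae, ae_restrict_mem measurableSet_Ioc] with s hs1 hs2
  have hs0 : (0:ℝ) ≤ s := le_trans ha hs2.1.le
  rw [Real.norm_eq_abs, abs_mul, abs_mul]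
  have h1 : |lam i s| ≤ Clam := by
    have := hlam_bd i s hs0
    rw [abs_of_nonneg this.1]; exact this.2
  have h2 : |Real.exp (-(Lam lam i s))| ≤ 1 := by
    rw [abs_of_nonneg (Real.exp_nonneg _)]
    exact Real.exp_le_one_iff.mpr (neg_nonpos.mpr (Lam_nonneg hlam_bd i hs0))
  have h3 : |Wfun q d ts lam Q fW phi v p i s| ≤ Cv :=
    Wfun_abs_le hts0 htsmono hlam_bd hQ_bd hQ_sum hfW_nonneg hfW_int hCv hv_bd hp i hs0
  calc |lam i s| * |Real.exp (-(Lam lam i s))| * |Wfun q d ts lam Q fW phi v p i s|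
      ≤ Clam * 1 * Cv := by
        apply mul_le_mul _ h3 (abs_nonneg _) (by positivity)
        exact mul_le_mul h1 h2 (abs_nonneg _) hClam
    _ = Clam * Cv := by ring
end wfun


section estimates
variable {q d : ℕ} {ts : ℕ → ℝ} {lam : ℕ → ℝ → ℝ} {Q : ℕ → ℕ → ℝ → ℝ}
  {fW : (Fin d → ℝ) → ℝ} {phi : ℕ → Fin d → ℝ} {Clam Cv Cg g2 : ℝ} {p : ℕ → ℝ}
  {v : (ℕ → ℝ) → ℝ} {g : ℕ → ℝ → ℝ}

lemma Iop_eq_Wfun (v : (ℕ → ℝ) → ℝ) (p : ℕ → ℝ) (u : ℝ) :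
    Iop q d ts lam Q fW phi v p u = ∑ i ∈ Finset.Icc 1 q, p i *
      ∫ s in (0:ℝ)..(min u (ts i)),
        lam i s * Real.exp (-(Lam lam i s)) * Wfun q d ts lam Q fW phi v p i s := rfl

lemma min_sub_min_le {a b t : ℝ} (hab : a ≤ b) : min b t - min a t ≤ b - a := by
  rcases le_total a t with h | h
  · rcases le_total b t with h2 | h2 <;> simp [min_eq_left, min_eq_right, h, h2] <;> nlinarith
  · rw [min_eq_right h, min_eq_right (le_trans h hab)]
    linarith

lemma Iop_diff (hts0 : ts 0 = 0) (htsmono : ∀ i, i < q → ts i ≤ ts (i + 1))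
    (hlam_meas : ∀ i, Measurable (lam i))
    (hlam_bd : ∀ i s, 0 ≤ s → lam i s ∈ Set.Icc 0 Clam) (hClam : 0 ≤ Clam)
    (hQ_meas : ∀ i j, Measurable (Q i j))
    (hQ_bd : ∀ i j s, 0 ≤ s → Q i j s ∈ Set.Icc (0:ℝ) 1)
    (hQ_sum : ∀ i s, 0 ≤ s → ∑ j ∈ Finset.Icc 1 q, Q i j s = 1)
    (hfW_meas : Measurable fW)
    (hfW_nonneg : ∀ y, 0 ≤ fW y) (hfW_int : ∫ y : Fin d → ℝ, fW y = 1)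
    (hv_meas : Measurable v) (hCv : 0 ≤ Cv)
    (hv_bd : ∀ p', mem1 q p' → |v p'| ≤ Cv) (hp : mem1 q p)
    {a b : ℝ} (ha : 0 ≤ a) (hab : a ≤ b) :
    |Iop q d ts lam Q fW phi v p b - Iop q d ts lam Q fW phi v p a|
      ≤ Cv * Clam * (b - a) := by
  rw [Iop_eq_Wfun, Iop_eq_Wfun, ← Finset.sum_sub_distrib]
  calc |∑ i ∈ Finset.Icc 1 q, ((p i * ∫ s in (0:ℝ)..(min b (ts i)),
        lam i s * Real.exp (-(Lam lam i s)) * Wfun q d ts lam Q fW phi v p i s)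
      - p i * ∫ s in (0:ℝ)..(min a (ts i)),
        lam i s * Real.exp (-(Lam lam i s)) * Wfun q d ts lam Q fW phi v p i s)|
      ≤ ∑ i ∈ Finset.Icc 1 q, p i * (Cv * Clam * (b - a)) := by
        refine (Finset.abs_sum_le_sum_abs _ _).trans (Finset.sum_le_sum ?_)
        intro i hi
        have hpi : 0 ≤ p i := hp.1 i hi
        have htsi : 0 ≤ ts i := ts_nonneg hts0 htsmono i (Finset.mem_Icc.mp hi).2
        have hα : 0 ≤ min a (ts i) := le_min ha htsi
        have hαβ : min a (ts i) ≤ min b (ts i) := min_le_min hab le_rfl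
        rw [← mul_sub, abs_mul, abs_of_nonneg hpi]
        apply mul_le_mul_of_nonneg_left _ hpi
        have h1 := F_intInt hts0 htsmono hlam_meas hlam_bd hClam hQ_meas hQ_bd hQ_sum
          hfW_meas hfW_nonneg hfW_int hv_meas hCv hv_bd hp (phi := phi) i (le_refl (0:ℝ)) hα
        have h2 := F_intInt hts0 htsmono hlam_meas hlam_bd hClam hQ_meas hQ_bd hQ_sum
          hfW_meas hfW_nonneg hfW_int hv_meas hCv hv_bd hp (phi := phi) i hα hαβ
        rw [← intervalIntegral.integral_add_adjacent_intervals h1 h2, add_sub_cancel_left]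
        have hbd := intervalIntegral.norm_integral_le_of_norm_le_const (C := Clam * Cv)
          (f := fun s => lam i s * Real.exp (-(Lam lam i s)) *
            Wfun q d ts lam Q fW phi v p i s)
          (a := min a (ts i)) (b := min b (ts i)) ?_
        · rw [Real.norm_eq_abs] at hbd
          refine hbd.trans ?_
          rw [abs_of_nonneg (by linarith)]
          have h8 := min_sub_min_le (t := ts i) hab
          have h9 : (0:ℝ) ≤ Clam * Cv := mul_nonneg hClam hCv
          nlinarith [mul_le_mul_of_nonneg_left h8 h9]
        · intro s hs
          rw [Set.uIoc_of_le hαβ] at hs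
          have hs0 : (0:ℝ) ≤ s := le_trans hα hs.1.le
          have h1 : |lam i s| ≤ Clam := by
            have := hlam_bd i s hs0
            rw [abs_of_nonneg this.1]; exact this.2
          have h2 : |Real.exp (-(Lam lam i s))| ≤ 1 := by
            rw [abs_of_nonneg (Real.exp_nonneg _)]
            exact Real.exp_le_one_iff.mpr (neg_nonpos.mpr (Lam_nonneg hlam_bd i hs0))
          have h3 : |Wfun q d ts lam Q fW phi v p i s| ≤ Cv :=
            Wfun_abs_le hts0 htsmono hlam_bd hQ_bd hQ_sum hfW_nonneg hfW_int hCv hv_bd hp i hs0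
          rw [Real.norm_eq_abs, abs_mul, abs_mul]
          calc |lam i s| * |Real.exp (-(Lam lam i s))| * |Wfun q d ts lam Q fW phi v p i s|
              ≤ Clam * 1 * Cv := by
                apply mul_le_mul _ h3 (abs_nonneg _) (by positivity)
                exact mul_le_mul h1 h2 (abs_nonneg _) hClam
            _ = Clam * Cv := by ring
    _ = Cv * Clam * (b - a) := by
        rw [← Finset.sum_mul, hp.2, one_mul]

lemma Hop_diff (hts0 : ts 0 = 0) (htsmono : ∀ i, i < q → ts i ≤ ts (i + 1))
    (hlam_meas : ∀ i, Measurable (lam i))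
    (hlam_bd : ∀ i s, 0 ≤ s → lam i s ∈ Set.Icc 0 Clam) (hClam : 0 ≤ Clam)
    (hCg : 0 ≤ Cg) (hg2 : 0 ≤ g2)
    (hg_bd : ∀ i ∈ Finset.Icc 1 q, ∀ t, 0 ≤ t → |g i t| ≤ Cg)
    (hg_lip : ∀ i ∈ Finset.Icc 1 q, ∀ t u, t ∈ Set.Icc 0 (ts i) → u ∈ Set.Icc 0 (ts i) →
      |g i t - g i u| ≤ g2 * |t - u|)
    (hp : mem1 q p) {a b : ℝ} (ha : 0 ≤ a) (hab : a ≤ b)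
    (hcross : ∀ i ∈ Finset.Icc 1 q, ¬(a < ts i ∧ ts i ≤ b)) :
    |Hop q ts lam g p b - Hop q ts lam g p a| ≤ (g2 + Cg * Clam) * (b - a) := by
  unfold Hop
  rw [← Finset.sum_sub_distrib]
  refine (Finset.abs_sum_le_sum_abs _ _).trans ?_
  calc ∑ i ∈ Finset.Icc 1 q, |(if b < ts i then p i * Real.exp (-(Lam lam i b)) * g i b else 0)
        - (if a < ts i then p i * Real.exp (-(Lam lam i a)) * g i a else 0)|
      ≤ ∑ i ∈ Finset.Icc 1 q, p i * ((g2 + Cg * Clam) * (b - a)) := by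
        apply Finset.sum_le_sum
        intro i hi
        have hpi : 0 ≤ p i := hp.1 i hi
        by_cases hb : b < ts i
        · have hai : a < ts i := lt_of_le_of_lt hab hb
          rw [if_pos hb, if_pos hai]
          have hLa : 0 ≤ Lam lam i a := Lam_nonneg hlam_bd i ha
          have hLb : 0 ≤ Lam lam i b := Lam_nonneg hlam_bd i (le_trans ha hab)
          have hLd := Lam_diff_bounds hClam hlam_meas hlam_bd i ha hab
          have hexp : |Real.exp (-(Lam lam i b)) - Real.exp (-(Lam lam i a))|
              ≤ Clam * (b - a) := by
            refine (exp_neg_lip hLb hLa).trans ?_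
            rw [abs_of_nonneg (by linarith)]
            linarith
          have hga : |g i a| ≤ Cg := hg_bd i hi a ha
          have hgb : |g i b| ≤ Cg := hg_bd i hi b (le_trans ha hab)
          have hglip : |g i b - g i a| ≤ g2 * (b - a) := by
            have h7 := hg_lip i hi b a ⟨le_trans ha hab, hb.le⟩ ⟨ha, hai.le⟩
            rwa [abs_of_nonneg (show (0:ℝ) ≤ b - a by linarith)] at h7
          have hea : Real.exp (-(Lam lam i a)) ≤ 1 :=
            Real.exp_le_one_iff.mpr (neg_nonpos.mpr hLa)
          have key : Real.exp (-(Lam lam i b)) * g i b - Real.exp (-(Lam lam i a)) * g i a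
              = (Real.exp (-(Lam lam i b)) - Real.exp (-(Lam lam i a))) * g i b
                + Real.exp (-(Lam lam i a)) * (g i b - g i a) := by ring
          calc |p i * Real.exp (-(Lam lam i b)) * g i b
                - p i * Real.exp (-(Lam lam i a)) * g i a|
              = p i * |Real.exp (-(Lam lam i b)) * g i b
                - Real.exp (-(Lam lam i a)) * g i a| := by
                rw [show p i * Real.exp (-(Lam lam i b)) * g i b
                    - p i * Real.exp (-(Lam lam i a)) * g i a
                  = p i * (Real.exp (-(Lam lam i b)) * g i b
                    - Real.exp (-(Lam lam i a)) * g i a) from by ring, abs_mul,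
                  abs_of_nonneg hpi]
            _ ≤ p i * ((g2 + Cg * Clam) * (b - a)) := by
                apply mul_le_mul_of_nonneg_left _ hpi
                rw [key]
                refine (abs_add_le _ _).trans ?_
                rw [abs_mul, abs_mul]
                have e1 : |Real.exp (-(Lam lam i b)) - Real.exp (-(Lam lam i a))| * |g i b|
                    ≤ (Clam * (b - a)) * Cg :=
                  mul_le_mul hexp hgb (abs_nonneg _) (mul_nonneg hClam (by linarith))
                have e2 : |Real.exp (-(Lam lam i a))| * |g i b - g i a| ≤ 1 * (g2 * (b - a)) := by
                  apply mul_le_mul _ hglip (abs_nonneg _) (by norm_num)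
                  rw [abs_of_nonneg (Real.exp_nonneg _)]; exact hea
                nlinarith
        · have hai : ¬ a < ts i := by
            intro hai
            rcases lt_or_ge b (ts i) with h | h
            · exact hb h
            · exact hcross i hi ⟨hai, h⟩
          rw [if_neg hb, if_neg hai]
          simp only [sub_zero, abs_zero]
          exact mul_nonneg hpi (mul_nonneg (by positivity) (by linarith))
    _ = (g2 + Cg * Clam) * (b - a) := by rw [← Finset.sum_mul, hp.2, one_mul]

lemma bsum_eq {a b : ℝ} (hab : a ≤ b)
    (hcross : ∀ i ∈ Finset.Icc 1 q, ¬(a < ts i ∧ ts i ≤ b)) :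
    (∑ i ∈ Finset.Icc 1 q, if ts i ≤ b then bTerm q d ts lam Q fW phi v p i else 0)
      = ∑ i ∈ Finset.Icc 1 q, if ts i ≤ a then bTerm q d ts lam Q fW phi v p i else 0 := by
  apply Finset.sum_congr rfl
  intro i hi
  congr 1
  apply propext
  constructor
  · intro h
    by_contra h2
    push_neg at h2
    exact hcross i hi ⟨h2, h⟩
  · intro h; exact le_trans h hab

lemma Jop_diff (hts0 : ts 0 = 0) (htsmono : ∀ i, i < q → ts i ≤ ts (i + 1))
    (hlam_meas : ∀ i, Measurable (lam i))
    (hlam_bd : ∀ i s, 0 ≤ s → lam i s ∈ Set.Icc 0 Clam) (hClam : 0 ≤ Clam)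
    (hQ_meas : ∀ i j, Measurable (Q i j))
    (hQ_bd : ∀ i j s, 0 ≤ s → Q i j s ∈ Set.Icc (0:ℝ) 1)
    (hQ_sum : ∀ i s, 0 ≤ s → ∑ j ∈ Finset.Icc 1 q, Q i j s = 1)
    (hfW_meas : Measurable fW)
    (hfW_nonneg : ∀ y, 0 ≤ fW y) (hfW_int : ∫ y : Fin d → ℝ, fW y = 1)
    (hv_meas : Measurable v) (hCv : 0 ≤ Cv)
    (hv_bd : ∀ p', mem1 q p' → |v p'| ≤ Cv)
    (hCg : 0 ≤ Cg) (hg2 : 0 ≤ g2) (hCvCg : Cv ≤ Cg)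
    (hg_bd : ∀ i ∈ Finset.Icc 1 q, ∀ t, 0 ≤ t → |g i t| ≤ Cg)
    (hg_lip : ∀ i ∈ Finset.Icc 1 q, ∀ t u, t ∈ Set.Icc 0 (ts i) → u ∈ Set.Icc 0 (ts i) →
      |g i t - g i u| ≤ g2 * |t - u|)
    (hp : mem1 q p) {a b : ℝ} (ha : 0 ≤ a) (hab : a ≤ b)
    (hcross : ∀ i ∈ Finset.Icc 1 q, ¬(a < ts i ∧ ts i ≤ b)) :
    |Jop q d ts lam Q fW phi v g p b - Jop q d ts lam Q fW phi v g p a|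
      ≤ (g2 + 2 * Cg * Clam) * (b - a) := by
  unfold Jop Gop
  rw [bsum_eq hab hcross]
  have hH := Hop_diff hts0 htsmono hlam_meas hlam_bd hClam hCg hg2 hg_bd hg_lip hp ha hab hcross
  have hI := Iop_diff hts0 htsmono hlam_meas hlam_bd hClam hQ_meas hQ_bd hQ_sum hfW_meas
    hfW_nonneg hfW_int hv_meas hCv hv_bd hp (phi := phi) ha hab
  have key : Hop q ts lam g p b + (Iop q d ts lam Q fW phi v p b
        + ∑ i ∈ Finset.Icc 1 q, if ts i ≤ a then bTerm q d ts lam Q fW phi v p i else 0)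
      - (Hop q ts lam g p a + (Iop q d ts lam Q fW phi v p a
        + ∑ i ∈ Finset.Icc 1 q, if ts i ≤ a then bTerm q d ts lam Q fW phi v p i else 0))
      = (Hop q ts lam g p b - Hop q ts lam g p a)
        + (Iop q d ts lam Q fW phi v p b - Iop q d ts lam Q fW phi v p a) := by ring
  rw [key]
  refine (abs_add_le _ _).trans ?_
  have : Cv * Clam * (b - a) ≤ Cg * Clam * (b - a) := by
    apply mul_le_mul_of_nonneg_right _ (by linarith)
    exact mul_le_mul_of_nonneg_right hCvCg hClam
  linarith

lemma Hop_abs_le (hts0 : ts 0 = 0) (htsmono : ∀ i, i < q → ts i ≤ ts (i + 1))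
    (hlam_bd : ∀ i s, 0 ≤ s → lam i s ∈ Set.Icc 0 Clam) (hCg : 0 ≤ Cg)
    (hg_bd : ∀ i ∈ Finset.Icc 1 q, ∀ t, 0 ≤ t → |g i t| ≤ Cg)
    (hp : mem1 q p) {u : ℝ} (hu : 0 ≤ u) :
    |Hop q ts lam g p u| ≤ Cg := by
  unfold Hop
  refine (Finset.abs_sum_le_sum_abs _ _).trans ?_
  calc ∑ i ∈ Finset.Icc 1 q, |if u < ts i then p i * Real.exp (-(Lam lam i u)) * g i u else 0|
      ≤ ∑ i ∈ Finset.Icc 1 q, p i * Cg := by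
        apply Finset.sum_le_sum
        intro i hi
        have hpi : 0 ≤ p i := hp.1 i hi
        split_ifs with h
        · rw [abs_mul, abs_mul, abs_of_nonneg hpi]
          have h1 : |Real.exp (-(Lam lam i u))| ≤ 1 := by
            rw [abs_of_nonneg (Real.exp_nonneg _)]
            exact Real.exp_le_one_iff.mpr (neg_nonpos.mpr (Lam_nonneg hlam_bd i hu))
          have h2 : |g i u| ≤ Cg := hg_bd i hi u hu
          calc p i * |Real.exp (-(Lam lam i u))| * |g i u| ≤ p i * 1 * Cg := by
                apply mul_le_mul _ h2 (abs_nonneg _) (by positivity)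
                exact mul_le_mul_of_nonneg_left h1 hpi
            _ = p i * Cg := by ring
        · simpa using mul_nonneg hpi hCg
    _ = Cg := by rw [← Finset.sum_mul, hp.2, one_mul]

lemma bTerm_abs_le (hts0 : ts 0 = 0) (htsmono : ∀ i, i < q → ts i ≤ ts (i + 1))
    (hlam_bd : ∀ i s, 0 ≤ s → lam i s ∈ Set.Icc 0 Clam)
    (hQ_bd : ∀ i j s, 0 ≤ s → Q i j s ∈ Set.Icc (0:ℝ) 1)
    (hQ_sum : ∀ i s, 0 ≤ s → ∑ j ∈ Finset.Icc 1 q, Q i j s = 1)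
    (hfW_nonneg : ∀ y, 0 ≤ fW y) (hfW_int : ∫ y : Fin d → ℝ, fW y = 1)
    (hCv : 0 ≤ Cv) (hv_bd : ∀ p', mem1 q p' → |v p'| ≤ Cv) (hp : mem1 q p)
    {i : ℕ} (hi : i ∈ Finset.Icc 1 q) :
    |bTerm q d ts lam Q fW phi v p i| ≤ p i * Cv := by
  unfold bTerm
  have hpi : 0 ≤ p i := hp.1 i hi
  have htsi : 0 ≤ ts i := ts_nonneg hts0 htsmono i (Finset.mem_Icc.mp hi).2
  rw [abs_mul, abs_mul, abs_of_nonneg hpi]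
  have h1 : |Real.exp (-(Lam lam i (ts i)))| ≤ 1 := by
    rw [abs_of_nonneg (Real.exp_nonneg _)]
    exact Real.exp_le_one_iff.mpr (neg_nonpos.mpr (Lam_nonneg hlam_bd i htsi))
  have h2 : |∫ y : Fin d → ℝ, v (Psi q d ts lam Q fW phi p y (ts i)) *
      ∑ j ∈ Finset.Icc 1 q, Q i j (ts i) * fW (y - phi j)| ≤ Cv :=
    Wfun_abs_le hts0 htsmono hlam_bd hQ_bd hQ_sum hfW_nonneg hfW_int hCv hv_bd hp i htsi
  calc p i * |Real.exp (-(Lam lam i (ts i)))| * |_| ≤ p i * 1 * Cv := by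
        apply mul_le_mul _ h2 (abs_nonneg _) (by positivity)
        exact mul_le_mul_of_nonneg_left h1 hpi
    _ = p i * Cv := by ring

lemma Iop_zero (hts0 : ts 0 = 0) (htsmono : ∀ i, i < q → ts i ≤ ts (i + 1)) :
    Iop q d ts lam Q fW phi v p 0 = 0 := by
  unfold Iop
  apply Finset.sum_eq_zero
  intro i hi
  have : min (0:ℝ) (ts i) = 0 :=
    min_eq_left (ts_nonneg hts0 htsmono i (Finset.mem_Icc.mp hi).2)
  rw [this, intervalIntegral.integral_same, mul_zero]

lemma Iop_min (htsmono : ∀ i, i < q → ts i ≤ ts (i + 1)) (u : ℝ) :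
    Iop q d ts lam Q fW phi v p u = Iop q d ts lam Q fW phi v p (min u (ts q)) := by
  unfold Iop
  apply Finset.sum_congr rfl
  intro i hi
  have h : min (min u (ts q)) (ts i) = min u (ts i) := by
    rw [min_assoc, min_eq_right (ts_mono htsmono i q (Finset.mem_Icc.mp hi).2 le_rfl)]
  rw [h]

lemma Jop_abs_le (hts0 : ts 0 = 0) (htsmono : ∀ i, i < q → ts i ≤ ts (i + 1))
    (hlam_meas : ∀ i, Measurable (lam i))
    (hlam_bd : ∀ i s, 0 ≤ s → lam i s ∈ Set.Icc 0 Clam) (hClam : 0 ≤ Clam)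
    (hQ_meas : ∀ i j, Measurable (Q i j))
    (hQ_bd : ∀ i j s, 0 ≤ s → Q i j s ∈ Set.Icc (0:ℝ) 1)
    (hQ_sum : ∀ i s, 0 ≤ s → ∑ j ∈ Finset.Icc 1 q, Q i j s = 1)
    (hfW_meas : Measurable fW)
    (hfW_nonneg : ∀ y, 0 ≤ fW y) (hfW_int : ∫ y : Fin d → ℝ, fW y = 1)
    (hv_meas : Measurable v) (hCv : 0 ≤ Cv)
    (hv_bd : ∀ p', mem1 q p' → |v p'| ≤ Cv) (hCg : 0 ≤ Cg)
    (hg_bd : ∀ i ∈ Finset.Icc 1 q, ∀ t, 0 ≤ t → |g i t| ≤ Cg)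
    (hp : mem1 q p) {u : ℝ} (hu : 0 ≤ u) :
    |Jop q d ts lam Q fW phi v g p u| ≤ Cg + (Cv * Clam * ts q + Cv) := by
  unfold Jop Gop
  have hH := Hop_abs_le hts0 htsmono hlam_bd hCg hg_bd hp hu
  have htq : 0 ≤ ts q := ts_nonneg hts0 htsmono q le_rfl
  have hI : |Iop q d ts lam Q fW phi v p u| ≤ Cv * Clam * ts q := by
    rw [Iop_min htsmono, show Iop q d ts lam Q fW phi v p (min u (ts q))
      = Iop q d ts lam Q fW phi v p (min u (ts q)) - Iop q d ts lam Q fW phi v p 0 from by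
        rw [Iop_zero hts0 htsmono, sub_zero]]
    refine (Iop_diff hts0 htsmono hlam_meas hlam_bd hClam hQ_meas hQ_bd hQ_sum hfW_meas
      hfW_nonneg hfW_int hv_meas hCv hv_bd hp (phi := phi) le_rfl (le_min hu htq)).trans ?_
    have h8 : min u (ts q) ≤ ts q := min_le_right _ _
    have h9 : (0:ℝ) ≤ Cv * Clam := mul_nonneg hCv hClam
    nlinarith [mul_le_mul_of_nonneg_left h8 h9]
  have hB : |∑ i ∈ Finset.Icc 1 q, if ts i ≤ u then bTerm q d ts lam Q fW phi v p i else 0|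
      ≤ Cv := by
    refine (Finset.abs_sum_le_sum_abs _ _).trans ?_
    calc ∑ i ∈ Finset.Icc 1 q, |if ts i ≤ u then bTerm q d ts lam Q fW phi v p i else 0|
        ≤ ∑ i ∈ Finset.Icc 1 q, p i * Cv := by
          apply Finset.sum_le_sum
          intro i hi
          split_ifs with h
          · exact bTerm_abs_le hts0 htsmono hlam_bd hQ_bd hQ_sum hfW_nonneg hfW_int hCv
              hv_bd hp hi
          · simpa using mul_nonneg (hp.1 i hi) hCv
      _ = Cv := by rw [← Finset.sum_mul, hp.2, one_mul]
  calc |Hop q ts lam g p u + (Iop q d ts lam Q fW phi v p u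
        + ∑ i ∈ Finset.Icc 1 q, if ts i ≤ u then bTerm q d ts lam Q fW phi v p i else 0)|
      ≤ |Hop q ts lam g p u| + (|Iop q d ts lam Q fW phi v p u|
        + |∑ i ∈ Finset.Icc 1 q, if ts i ≤ u then bTerm q d ts lam Q fW phi v p i else 0|) :=
        (abs_add_le _ _).trans (by gcongr; exact abs_add_le _ _)
    _ ≤ Cg + (Cv * Clam * ts q + Cv) := by linarith

lemma Jop_eq_Kop (hts0 : ts 0 = 0) (htsmono : ∀ i, i < q → ts i ≤ ts (i + 1))
    {u : ℝ} (hu : ts q ≤ u) :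
    Jop q d ts lam Q fW phi v g p u = Kop q d ts lam Q fW phi v p := by
  unfold Jop Kop Gop Hop
  have h1 : ∀ i ∈ Finset.Icc 1 q, ts i ≤ u := fun i hi =>
    le_trans (ts_mono htsmono i q (Finset.mem_Icc.mp hi).2 le_rfl) hu
  have hH : (∑ i ∈ Finset.Icc 1 q,
      if u < ts i then p i * Real.exp (-(Lam lam i u)) * g i u else 0) = 0 := by
    apply Finset.sum_eq_zero
    intro i hi
    rw [if_neg (not_lt.mpr (h1 i hi))]
  rw [hH, zero_add]
  congr 1
  · unfold Iop
    apply Finset.sum_congr rfl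
    intro i hi
    have h2 : min u (ts i) = ts i :=
      min_eq_right (h1 i hi)
    have h3 : min (ts q) (ts i) = ts i :=
      min_eq_right (ts_mono htsmono i q (Finset.mem_Icc.mp hi).2 le_rfl)
    rw [h2, h3]
  · apply Finset.sum_congr rfl
    intro i hi
    rw [if_pos (h1 i hi), if_pos (ts_mono htsmono i q (Finset.mem_Icc.mp hi).2 le_rfl)]

end estimates


end aux

/-- **Lemma 5.11 (pointwise error between `L` and the discretized operator `L^d`).** -/
theorem Ld_discretization_error
    (q d : ℕ) (hq : 1 ≤ q) (hd : 1 ≤ d)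
    (ts : ℕ → ℝ) (hts0 : ts 0 = 0) (hts1 : 0 < ts 1)
    (htsmono : ∀ i, i < q → ts i ≤ ts (i + 1))
    (Clam : ℝ) (hClam : 0 ≤ Clam)
    (lam : ℕ → ℝ → ℝ) (hlam_meas : ∀ i, Measurable (lam i))
    (hlam_bd : ∀ i s, 0 ≤ s → lam i s ∈ Set.Icc 0 Clam)
    (Q : ℕ → ℕ → ℝ → ℝ) (hQ_meas : ∀ i j, Measurable (Q i j))
    (hQ_bd : ∀ i j s, 0 ≤ s → Q i j s ∈ Set.Icc (0:ℝ) 1)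
    (hQ_sum : ∀ i s, 0 ≤ s → ∑ j ∈ Finset.Icc 1 q, Q i j s = 1)
    (fW : (Fin d → ℝ) → ℝ) (hfW_meas : Measurable fW)
    (hfW_nonneg : ∀ y, 0 ≤ fW y) (hfW_int : ∫ y : Fin d → ℝ, fW y = 1)
    (phi : ℕ → Fin d → ℝ)
    (g : ℕ → ℝ → ℝ) (hg_meas : ∀ i, Measurable (g i))
    (Cg g2 : ℝ) (hCg : 0 ≤ Cg) (hg2 : 0 ≤ g2)
    (hg_bd : ∀ i ∈ Finset.Icc 1 q, ∀ t, 0 ≤ t → |g i t| ≤ Cg)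
    (hg_lip : ∀ i ∈ Finset.Icc 1 q, ∀ t u, t ∈ Set.Icc 0 (ts i) → u ∈ Set.Icc 0 (ts i) →
      |g i t - g i u| ≤ g2 * |t - u|)
    (v : (ℕ → ℝ) → ℝ) (hv_meas : Measurable v)
    (Cv lv : ℝ) (hCv : 0 ≤ Cv) (hlv : 0 ≤ lv)
    (hv_bd : ∀ p, mem1 q p → |v p| ≤ Cv)
    (hv_lip : ∀ p p', mem1 q p → mem1 q p' → |v p - v p'| ≤ lv * l1 q p p')
    (Δ : ℝ) (hΔpos : 0 < Δ)
    (hΔ : ∀ i j, i ≤ q → j ≤ q → ts i ≠ ts j → 2 * Δ < |ts i - ts j|)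
    (hCvCg : Cv ≤ Cg)
    (p : ℕ → ℝ) (hp : mem1 q p) :
    0 ≤ Lop q d ts lam Q fW phi v g p -
        max (sSup {x : ℝ | ∃ m, m < q ∧ ts m < ts (m + 1) ∧
              ∃ u ∈ grid ts Δ m, x = Jop q d ts lam Q fW phi v g p u})
          (Kop q d ts lam Q fW phi v p) ∧
      Lop q d ts lam Q fW phi v g p -
        max (sSup {x : ℝ | ∃ m, m < q ∧ ts m < ts (m + 1) ∧
              ∃ u ∈ grid ts Δ m, x = Jop q d ts lam Q fW phi v g p u})
          (Kop q d ts lam Q fW phi v p) ≤ (g2 + 2 * Cg * Clam) * Δ := by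
  classical
  set J := fun u => Jop q d ts lam Q fW phi v g p u with hJdef
  set S : Set ℝ := {x : ℝ | ∃ m, m < q ∧ ts m < ts (m + 1) ∧
      ∃ u ∈ grid ts Δ m, x = Jop q d ts lam Q fW phi v g p u} with hSdef
  set K := Kop q d ts lam Q fW phi v p with hKdef
  set c : ℝ := g2 + 2 * Cg * Clam with hcdef
  have hc : 0 ≤ c := by positivity
  have hcΔ : 0 ≤ c * Δ := mul_nonneg hc hΔpos.le
  set B : ℝ := Cg + (Cv * Clam * ts q + Cv) with hBdef
  have hJb : ∀ u : ℝ, 0 ≤ u → |J u| ≤ B := fun u hu =>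
    Jop_abs_le hts0 htsmono hlam_meas hlam_bd hClam hQ_meas hQ_bd hQ_sum hfW_meas
      hfW_nonneg hfW_int hv_meas hCv hv_bd hCg hg_bd hp hu
  have hbdd : BddAbove (Set.range fun u : Set.Ici (0:ℝ) => J u.1) := by
    refine ⟨B, ?_⟩
    rintro x ⟨u, rfl⟩
    exact (abs_le.mp (hJb u.1 u.2)).2
  have hJleL : ∀ u : ℝ, 0 ≤ u → J u ≤ Lop q d ts lam Q fW phi v g p := by
    intro u hu
    exact le_ciSup hbdd (⟨u, hu⟩ : Set.Ici (0:ℝ))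
  have htsnn : ∀ i, i ≤ q → 0 ≤ ts i := ts_nonneg hts0 htsmono
  have hgap : ∀ m, m < q → ts m < ts (m + 1) → 2 * Δ < ts (m + 1) - ts m := by
    intro m hm hlt
    have := hΔ m (m + 1) hm.le hm hlt.ne
    rwa [abs_sub_comm, abs_of_pos (by linarith)] at this
  have hgrid_bd : ∀ m, m < q → ts m < ts (m + 1) → ∀ u' ∈ grid ts Δ m,
      ts m + Δ ≤ u' ∧ u' ≤ ts (m + 1) - Δ := by
    intro m hm hlt u' hu'
    have hg2' := hgap m hm hlt
    rcases hu' with ⟨i, hi1, hi2, rfl⟩ | rfl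
    · constructor
      · have : (1:ℝ) ≤ (i:ℝ) := by exact_mod_cast hi1
        nlinarith
      · exact hi2
    · constructor <;> linarith
  have hSne : S.Nonempty := by
    refine ⟨J (ts 1 - Δ), 0, hq, ?_, ts 1 - Δ, Or.inr rfl, rfl⟩
    rw [hts0]; exact hts1
  have hSub : ∀ x ∈ S, x ≤ B := by
    rintro x ⟨m, hm, hlt, u', hu', rfl⟩
    have hb := hgrid_bd m hm hlt u' hu'
    have h0 : 0 ≤ u' := le_trans (by
      have := htsnn m hm.le
      linarith [hΔpos.le]) hb.1
    exact (abs_le.mp (hJb u' h0)).2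
  have hSbdd : BddAbove S := ⟨B, hSub⟩
  have hSleL : sSup S ≤ Lop q d ts lam Q fW phi v g p := by
    apply csSup_le hSne
    rintro x ⟨m, hm, hlt, u', hu', rfl⟩
    have hb := hgrid_bd m hm hlt u' hu'
    have h0 : 0 ≤ u' := le_trans (by
      have := htsnn m hm.le
      linarith [hΔpos.le]) hb.1
    exact hJleL u' h0
  have hKJ : K = J (ts q) := (Jop_eq_Kop hts0 htsmono le_rfl).symm
  have hKleL : K ≤ Lop q d ts lam Q fW phi v g p := by
    rw [hKJ]
    exact hJleL (ts q) (htsnn q le_rfl)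
  have hMxle : max (sSup S) K ≤ Lop q d ts lam Q fW phi v g p := max_le hSleL hKleL
  have hupper : Lop q d ts lam Q fW phi v g p ≤ max (sSup S) K + c * Δ := by
    apply ciSup_le
    rintro ⟨u, hu⟩
    simp only [Set.mem_Ici] at hu
    rcases le_or_gt (ts q) u with hqle | hult
    · have : J u = K := Jop_eq_Kop hts0 htsmono hqle
      rw [show Jop q d ts lam Q fW phi v g p u = J u from rfl, this]
      linarith [le_max_right (sSup S) K]
    · -- find the interval containing u
      have hex : ∃ n, u < ts n := ⟨q, hult⟩
      set k := Nat.find hex with hkdef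
      have hk : u < ts k := Nat.find_spec hex
      have hk0 : k ≠ 0 := by
        intro h
        rw [h, hts0] at hk
        linarith
      have hkq : k ≤ q := Nat.find_min' hex hult
      set m := k - 1 with hmdef
      have hmk : m + 1 = k := Nat.succ_pred_eq_of_ne_zero hk0
      have hmq : m < q := by omega
      have htsmu : ts m ≤ u := by
        by_contra h
        push_neg at h
        exact absurd h (by simpa using Nat.find_min hex (show m < k by omega))
      have hut : u < ts (m + 1) := by rw [hmk]; exact hk
      have hlt : ts m < ts (m + 1) := lt_of_le_of_lt htsmu hut
      have hgap' := hgap m hmq hlt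
      have htsm0 : 0 ≤ ts m := htsnn m hmq.le
      have hnc : ∀ x1 x2 : ℝ, ts m ≤ x1 → x2 < ts (m + 1) →
          ∀ i ∈ Finset.Icc 1 q, ¬(x1 < ts i ∧ ts i ≤ x2) := by
        intro x1 x2 hx1 hx2 i hi ⟨h1, h2⟩
        rcases le_or_gt i m with h | h
        · have : ts i ≤ ts m := ts_mono htsmono i m h hmq.le
          linarith
        · have : ts (m + 1) ≤ ts i := ts_mono htsmono (m + 1) i h (Finset.mem_Icc.mp hi).2
          linarith
      have key : ∃ u' ∈ grid ts Δ m, |J u - J u'| ≤ c * Δ := by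
        have hdiff : ∀ a b : ℝ, 0 ≤ a → a ≤ b → b - a ≤ Δ → ts m ≤ a → b < ts (m + 1) →
            |J b - J a| ≤ c * Δ := by
          intro a b ha hab hba htma hbm
          refine (Jop_diff hts0 htsmono hlam_meas hlam_bd hClam hQ_meas hQ_bd hQ_sum
            hfW_meas hfW_nonneg hfW_int hv_meas hCv hv_bd hCg hg2 hCvCg hg_bd hg_lip hp
            ha hab (hnc a b htma hbm)).trans ?_
          exact mul_le_mul_of_nonneg_left hba hc
        rcases le_or_gt u (ts m + Δ) with hA | hA'
        · -- case A : u' = ts m + Δ, u ≤ u'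
          refine ⟨ts m + Δ, Or.inl ⟨1, le_rfl, by push_cast; linarith, by push_cast; ring⟩, ?_⟩
          rw [abs_sub_comm]
          exact hdiff u (ts m + Δ) hu hA (by linarith) htsmu (by linarith)
        · rcases le_or_gt u (ts (m + 1) - Δ) with hB' | hC
          · -- case B : floor point
            set k' := ⌊(u - ts m) / Δ⌋₊ with hk'def
            have hk1 : 1 ≤ k' := by
              apply Nat.le_floor
              rw [le_div_iff₀ hΔpos]
              push_cast
              linarith
            have hfl : (k' : ℝ) * Δ ≤ u - ts m := by
              have := Nat.floor_le (div_nonneg (show (0:ℝ) ≤ u - ts m by linarith) hΔpos.le)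
              rw [le_div_iff₀ hΔpos] at this
              linarith [this]
            have hfl2 : u - ts m < ((k' : ℝ) + 1) * Δ := by
              have := Nat.lt_floor_add_one ((u - ts m) / Δ)
              rw [div_lt_iff₀ hΔpos] at this
              linarith [this]
            refine ⟨ts m + k' * Δ, Or.inl ⟨k', hk1, by linarith, rfl⟩, ?_⟩
            have hk'0 : (0:ℝ) ≤ (k' : ℝ) * Δ := by positivity
            exact hdiff (ts m + k' * Δ) u (by linarith) (by linarith) (by linarith)
              (by linarith) hut
          · -- case C : u' = ts (m+1) - Δ
            refine ⟨ts (m + 1) - Δ, Or.inr rfl, ?_⟩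
            exact hdiff (ts (m + 1) - Δ) u (by linarith) (by linarith) (by linarith)
              (by linarith) hut
      obtain ⟨u', hu'g, hd⟩ := key
      have hmem : J u' ∈ S := ⟨m, hmq, hlt, u', hu'g, rfl⟩
      have h1 : J u' ≤ sSup S := le_csSup hSbdd hmem
      have h2 := (abs_le.mp hd).2
      have h3 : sSup S ≤ max (sSup S) K := le_max_left _ _
      show Jop q d ts lam Q fW phi v g p u ≤ max (sSup S) K + c * Δ
      calc Jop q d ts lam Q fW phi v g p u = J u := rfl
        _ ≤ J u' + c * Δ := by linarith
        _ ≤ max (sSup S) K + c * Δ := by linarith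
  constructor
  · linarith
  · linarith


end PDMP
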